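/- Almost surely, for all integers j < k one has the pathwise bound w_{j,k} ≤ (k − j) + Σ_{j ≤ x < y ≤ k} max(v_{x,y} − (y − x), 0); consequently, w_{0,Γ₀} ≤ Γ₀ + Σ_{x=0}^{Γ₀−1} Z_x, where Z_x := sup_{y > x} max(v_{x,y} − (y − x), 0) and the random variables {Z_x}_{x∈ℤ} are independent and identically distributed. -/

import Mathlib

open MeasureTheory ProbabilityTheory Filter Real Set
open scoped ENNReal Topology

noncomputable section

namespace MaxPathWeight

def IsPath (j k : ℤ) (p : List ℤ) : Prop :=
  p.Chain' (· < ·) ∧ p.head? = some j ∧ p.getLast? = some k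

def edges (p : List ℤ) : List (ℤ × ℤ) := p.zip p.tail

structure EdgeData (Ω : Type) [MeasureSpace Ω] where
  v : ℤ → ℤ → Ω → EReal
  v_meas : ∀ j k, Measurable (v j k)
  v_ne_top : ∀ j k ω, v j k ω ≠ ⊤
  v_indep : iIndepFun
    (fun e : {e : ℤ × ℤ // e.1 < e.2} => v e.1.1 e.1.2) ℙ
  v_ident : ∀ j k : ℤ, j < k → Measure.map (v j k) ℙ = Measure.map (v 0 1) ℙ
  vp : ℤ → ℤ → Ω → ℝ
  vp_meas : ∀ j k, Measurable (vp j k)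
  vp_pos : ∀ j k ω, 0 < vp j k ω
  vp_couple : ∀ j k ω, 0 < v j k ω → (vp j k ω : EReal) = v j k ω
  vp_indep : iIndepFun
    (fun e : {e : ℤ × ℤ // e.1 < e.2} => vp e.1.1 e.1.2) ℙ
  vp_dist : ∀ j k : ℤ, j < k → ∀ s : Set ℝ, MeasurableSet s →
    ℙ {ω | vp j k ω ∈ s} * ℙ {ω | 0 < v 0 1 ω}
      = ℙ {ω | 0 < v 0 1 ω ∧ (v 0 1 ω).toReal ∈ s}
  pos_prob : 0 < ℙ {ω | 0 < v 0 1 ω}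
  nondeg : ∀ c : ℝ, 0 < c → ℙ {ω | vp 0 1 ω = c} < 1
  exp_moment : ∃ C : ℝ, 0 < C ∧
    ∫⁻ ω, ENNReal.ofReal (Real.exp (C * vp 0 1 ω)) ∂ℙ < ⊤

variable {Ω : Type} [MeasureSpace Ω]

def pathWeight (M : EdgeData Ω) (p : List ℤ) (ω : Ω) : EReal :=
  ((edges p).map fun e => M.v e.1 e.2 ω).sum

def posOnPath (M : EdgeData Ω) (p : List ℤ) (ω : Ω) : Prop :=
  ∀ e ∈ edges p, 0 < M.v e.1 e.2 ω

def w (M : EdgeData Ω) (j k : ℤ) (ω : Ω) : EReal :=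
  if j = k then 0 else sSup {x | ∃ p, IsPath j k p ∧ pathWeight M p ω = x}

def wp (M : EdgeData Ω) (j k : ℤ) (ω : Ω) : EReal :=
  sSup {x | ∃ p, IsPath j k p ∧ posOnPath M p ω ∧ pathWeight M p ω = x}

def IsSkeletonPlus (M : EdgeData Ω) (x : ℤ) (ω : Ω) : Prop :=
  ∀ j k : ℤ, j < x → x < k →
    (∃ p, IsPath j x p ∧ posOnPath M p ω) ∧ (∃ p, IsPath x k p ∧ posOnPath M p ω)

def Ar (M : EdgeData Ω) (c : ℝ) (x : ℤ) (ω : Ω) : Prop :=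
  ∀ i : ℕ, 1 ≤ i → ((c * i : ℝ) : EReal) ≤ w M x (x + i) ω

def Al (M : EdgeData Ω) (c : ℝ) (x : ℤ) (ω : Ω) : Prop :=
  ∀ j : ℕ, 1 ≤ j → ((c * j : ℝ) : EReal) ≤ w M (x - j) x ω

def A0 (M : EdgeData Ω) (c : ℝ) (x : ℤ) (ω : Ω) : Prop :=
  ∀ i j : ℕ, 1 ≤ i → 1 ≤ j → M.v (x - j) (x + i) ω < ((c * (i + j) : ℝ) : EReal)

def ArP (M : EdgeData Ω) (c : ℝ) (x : ℤ) (ω : Ω) : Prop :=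
  ∀ i : ℕ, 1 ≤ i → ((c * i : ℝ) : EReal) ≤ wp M x (x + i) ω

def AlP (M : EdgeData Ω) (c : ℝ) (x : ℤ) (ω : Ω) : Prop :=
  ∀ j : ℕ, 1 ≤ j → ((c * j : ℝ) : EReal) ≤ wp M (x - j) x ω

def IsRenewal (M : EdgeData Ω) (c₁ c₂ : ℝ) (x : ℤ) (ω : Ω) : Prop :=
  Al M c₁ x ω ∧ A0 M c₂ x ω ∧ Ar M c₁ x ω

def IsRenewalPlus (M : EdgeData Ω) (c₁ c₂ : ℝ) (x : ℤ) (ω : Ω) : Prop :=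
  AlP M c₁ x ω ∧ A0 M c₂ x ω ∧ ArP M c₁ x ω

/-- The edge model together with a measurable enumeration `tp` of the (a.s. infinite) set of
skeleton-plus vertices: `⋯ < t⁺₋₁ < 0 ≤ t⁺₀ < t⁺₁ < ⋯`. -/
structure EdgeModel (Ω : Type) [MeasureSpace Ω] extends EdgeData Ω where
  tp : ℤ → Ω → ℤ
  tp_meas : ∀ k, Measurable (tp k)
  tp_spec : ∀ᵐ ω ∂ℙ, StrictMono (fun k => tp k ω) ∧ tp (-1) ω < 0 ∧ 0 ≤ tp 0 ω ∧
    (∀ k : ℤ, IsSkeletonPlus toEdgeData (tp k ω) ω) ∧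
    (∀ x : ℤ, IsSkeletonPlus toEdgeData x ω → ∃ k, tp k ω = x)

/-- `γ⁺ = 1 / E (t⁺₁ - t⁺₀)`. -/
def gammaP (M : EdgeModel Ω) : ℝ := (∫ ω, ((M.tp 1 ω - M.tp 0 ω : ℤ) : ℝ) ∂ℙ)⁻¹

/-- `V = E min { v⁺_{i j} : t⁺₀ ≤ i < j ≤ t⁺₁ }`. -/
def Vconst (M : EdgeModel Ω) : ℝ :=
  ∫ ω, sInf {r : ℝ | ∃ i j : ℤ, M.tp 0 ω ≤ i ∧ i < j ∧ j ≤ M.tp 1 ω ∧ M.vp i j ω = r} ∂ℙ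

/-- `ess inf v⁺ = inf {t > 0 : P(v⁺ < t) > 0}`. -/
def essInfVP (M : EdgeModel Ω) : ℝ :=
  sInf {t : ℝ | 0 < t ∧ 0 < ℙ {ω | M.vp 0 1 ω < t}}

/-- Admissibility of the constants `c₁ ≥ c₂ > 0`:
`γ⁺ · ess inf v⁺ < c₂ ≤ c₁ < γ⁺ · V`. -/
def Admissible (M : EdgeModel Ω) (c₁ c₂ : ℝ) : Prop :=
  0 < c₂ ∧ c₂ ≤ c₁ ∧ gammaP M * essInfVP M < c₂ ∧ c₁ < gammaP M * Vconst M

/-- The full renewal setting: the edge model, admissible constants `c₁ ≥ c₂ > 0`, and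
measurable enumerations `Γ` of the renewal vertices and `Γp` of the renewal-plus vertices. -/
structure RenewalSetting (Ω : Type) [MeasureSpace Ω] extends EdgeModel Ω where
  c₁ : ℝ
  c₂ : ℝ
  adm : Admissible toEdgeModel c₁ c₂
  Γ : ℤ → Ω → ℤ
  Γ_meas : ∀ k, Measurable (Γ k)
  Γ_spec : ∀ᵐ ω ∂ℙ, StrictMono (fun k => Γ k ω) ∧ Γ (-1) ω < 0 ∧ 0 ≤ Γ 0 ω ∧
    (∀ k : ℤ, IsRenewal toEdgeData c₁ c₂ (Γ k ω) ω) ∧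
    (∀ x : ℤ, IsRenewal toEdgeData c₁ c₂ x ω → ∃ k, Γ k ω = x)
  Γp : ℤ → Ω → ℤ
  Γp_meas : ∀ k, Measurable (Γp k)
  Γp_spec : ∀ᵐ ω ∂ℙ, StrictMono (fun k => Γp k ω) ∧ Γp (-1) ω < 0 ∧ 0 ≤ Γp 0 ω ∧
    (∀ k : ℤ, IsRenewalPlus toEdgeData c₁ c₂ (Γp k ω) ω) ∧
    (∀ x : ℤ, IsRenewalPlus toEdgeData c₁ c₂ x ω → ∃ k, Γp k ω = x)

/-- `τ = Γ₁ - Γ₀`, a representative of the common cycle-length distribution. -/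
def tau (S : RenewalSetting Ω) (ω : Ω) : ℤ := S.Γ 1 ω - S.Γ 0 ω

/-- `ζ = w_{Γ₀, Γ₁}`, a representative of the common cycle-weight distribution. -/
def zeta (S : RenewalSetting Ω) (ω : Ω) : ℝ :=
  (w S.toEdgeData (S.Γ 0 ω) (S.Γ 1 ω) ω).toReal

/-- `A(λ, μ) = ln E exp (λ τ + μ ζ)`. -/
def Afun (S : RenewalSetting Ω) (l m : ℝ) : ℝ :=
  Real.log (∫ ω, Real.exp (l * (tau S ω : ℝ) + m * zeta S ω) ∂ℙ)

/-- The rate function `D(α) = sup {λ + μ α : A(λ, μ) ≤ 0}`. -/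
def Dfun (S : RenewalSetting Ω) (α : ℝ) : ℝ :=
  sSup {x : ℝ | ∃ l m : ℝ, Afun S l m ≤ 0 ∧ x = l + m * α}

/-- `a = E ζ / E τ`. -/
def aC (S : RenewalSetting Ω) : ℝ :=
  (∫ ω, zeta S ω ∂ℙ) / (∫ ω, (tau S ω : ℝ) ∂ℙ)

/-- `σ² = E (ζ - a τ)² / E τ`. -/
def sigmaSq (S : RenewalSetting Ω) : ℝ :=
  (∫ ω, (zeta S ω - aC S * (tau S ω : ℝ)) ^ 2 ∂ℙ) / (∫ ω, (tau S ω : ℝ) ∂ℙ)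

/-- `σ`. -/
def sigmaC (S : RenewalSetting Ω) : ℝ := Real.sqrt (sigmaSq S)

/-- Condition `[Z]` : `v` is integer-valued, and the gcd of `{k ≥ 1 : P(v = k) > 0}` is `1`. -/
def CondZ (M : EdgeData Ω) : Prop :=
  ℙ {ω | M.v 0 1 ω = ⊥ ∨ ∃ m : ℤ, M.v 0 1 ω = ((m : ℝ) : EReal)} = 1 ∧
  ∀ d : ℕ, (∀ k : ℕ, 1 ≤ k → 0 < ℙ {ω | M.v 0 1 ω = ((k : ℝ) : EReal)} → d ∣ k) → d = 1

/-- Condition `[R]` : the distribution of `v` is non-lattice. -/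
def CondR (M : EdgeData Ω) : Prop :=
  ∀ a h : ℝ, 0 < h → (∑' s : ℤ, ℙ {ω | M.v 0 1 ω = ((a + s * h : ℝ) : EReal)}) < 1


/-- `Z_x = sup_{y > x} max (v_{x,y} - (y - x), 0)`. -/
def Zx (M : EdgeData Ω) (x : ℤ) (ω : Ω) : EReal :=
  ⨆ y : {y : ℤ // x < y}, max (M.v x y.1 ω - (((y.1 - x : ℤ) : ℝ) : EReal)) 0

/-!
Along a path `j = x₀ < x₁ < ⋯ < x_L = k` every edge satisfies
`v_{x,y} ≤ (y - x) + max (v_{x,y} - (y - x), 0)`; the lengths `y - x` telescope to `k - j`. The edges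
of a path are distinct pairs in `[j, k]` with distinct left endpoints, so the total excess is at most
the sum over all such pairs, and also at most `Σ_x Z_x`. For the probabilistic part, `Z_x` is a fixed
measurable function of the row `(v_{x, x+1+n})_{n ∈ ℕ}`; the rows are disjoint blocks of an i.i.d.
family, hence independent, each with law the infinite product of the law of `v`.
-/

def excess (a : EReal) (d : ℤ) : EReal := max (a - ((d : ℝ) : EReal)) 0

lemma excess_nonneg (a : EReal) (d : ℤ) : 0 ≤ excess a d := le_max_right _ _

lemma le_add_excess (a : EReal) (d : ℤ) : a ≤ ((d : ℝ) : EReal) + excess a d := by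
  induction a using EReal.rec with
  | bot => exact bot_le
  | top => simp [excess]
  | coe a =>
    calc (a : EReal) = (d : ℝ) + ((a - d : ℝ) : EReal) := by rw [← EReal.coe_add, add_sub_cancel]
      _ ≤ (d : ℝ) + excess a d := by
        gcongr
        exact le_max_of_le_left (EReal.coe_sub a d).le

lemma IsPath.of_cons_cons {j k x y : ℤ} {t : List ℤ} (h : IsPath j k (x :: y :: t)) :
    x = j ∧ x < y ∧ IsPath y k (y :: t) := by
  obtain ⟨hc, hj, hk⟩ := h
  obtain ⟨hxy, hc⟩ := List.isChain_cons_cons.mp hc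
  exact ⟨Option.some_inj.mp hj, hxy, hc, rfl, by rwa [List.getLast?_cons_cons] at hk⟩

lemma IsPath.le : ∀ {p : List ℤ} {j k : ℤ}, IsPath j k p → j ≤ k
  | [], _, _, ⟨_, hj, _⟩ => by simp at hj
  | [_], _, _, ⟨_, hj, hk⟩ => by simp_all
  | _ :: _ :: _, _, _, h => by
    obtain ⟨rfl, hxy, h'⟩ := h.of_cons_cons
    exact hxy.le.trans h'.le

lemma IsPath.bounds_of_mem_edges :
    ∀ {p : List ℤ} {j k : ℤ}, IsPath j k p → ∀ e ∈ edges p, j ≤ e.1 ∧ e.1 < e.2 ∧ e.2 ≤ k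
  | [], _, _, _, _, he => by simp [edges] at he
  | [_], _, _, _, _, he => by simp [edges] at he
  | x :: y :: t, _, _, h, e, he => by
    obtain ⟨rfl, hxy, h'⟩ := h.of_cons_cons
    rcases List.mem_cons.mp he with rfl | he
    · exact ⟨le_rfl, hxy, h'.le⟩
    · obtain ⟨hy, hlt, hk⟩ := h'.bounds_of_mem_edges e he
      exact ⟨hxy.le.trans hy, hlt, hk⟩

lemma map_fst_edges : ∀ p : List ℤ, (edges p).map Prod.fst = p.dropLast
  | [] | [_] => rfl
  | _ :: y :: t => congrArg (_ :: ·) (map_fst_edges (y :: t))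

lemma IsPath.nodup_map_fst_edges {j k : ℤ} {p : List ℤ} (h : IsPath j k p) :
    ((edges p).map Prod.fst).Nodup := by
  rw [map_fst_edges]
  exact (h.1.pairwise.imp ne_of_lt).sublist (List.dropLast_sublist p)

def pathExcess (M : EdgeData Ω) (p : List ℤ) (ω : Ω) : EReal :=
  ((edges p).map fun e => excess (M.v e.1 e.2 ω) (e.2 - e.1)).sum

section PathBounds

variable (M : EdgeData Ω) (ω : Ω)

lemma pathWeight_le_add_pathExcess :
    ∀ {p : List ℤ} {j k : ℤ}, IsPath j k p →
      pathWeight M p ω ≤ (((k - j : ℤ) : ℝ) : EReal) + pathExcess M p ω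
  | [], _, _, ⟨_, hj, _⟩ => by simp at hj
  | [_], _, _, ⟨_, hj, hk⟩ => by simp_all [pathWeight, pathExcess, edges]
  | x :: y :: t, _, k, h => by
    obtain ⟨rfl, -, h'⟩ := h.of_cons_cons
    calc pathWeight M (x :: y :: t) ω = M.v x y ω + pathWeight M (y :: t) ω := rfl
      _ ≤ ((((y - x : ℤ) : ℝ) : EReal) + excess (M.v x y ω) (y - x))
          + ((((k - y : ℤ) : ℝ) : EReal) + pathExcess M (y :: t) ω) :=
        add_le_add (le_add_excess _ _) (pathWeight_le_add_pathExcess h')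
      _ = (((k - x : ℤ) : ℝ) : EReal) + pathExcess M (x :: y :: t) ω := by
        rw [add_add_add_comm, ← EReal.coe_add, ← Int.cast_add, sub_add_sub_cancel']
        rfl

lemma w_le_add_of_forall_isPath {j k : ℤ} (hjk : j < k) {B : EReal}
    (hB : ∀ p, IsPath j k p → pathExcess M p ω ≤ B) :
    w M j k ω ≤ (((k - j : ℤ) : ℝ) : EReal) + B := by
  rw [w, if_neg hjk.ne]
  refine sSup_le ?_
  rintro _ ⟨p, hp, rfl⟩
  exact (pathWeight_le_add_pathExcess M ω hp).trans (add_le_add le_rfl (hB p hp))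

lemma pathExcess_le_sum_excess {j k : ℤ} {p : List ℤ}
    (hp : IsPath j k p) :
    pathExcess M p ω ≤ ∑ q ∈ (Finset.Icc j k ×ˢ Finset.Icc j k).filter (fun q => q.1 < q.2),
      excess (M.v q.1 q.2 ω) (q.2 - q.1) := by
  rw [pathExcess, ← List.sum_toFinset _ (hp.nodup_map_fst_edges.of_map _)]
  refine Finset.sum_le_sum_of_subset_of_nonneg (fun e he => ?_) fun _ _ _ => excess_nonneg _ _
  obtain ⟨hj, hlt, hk⟩ := hp.bounds_of_mem_edges e (List.mem_toFinset.mp he)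
  simp only [Finset.mem_filter, Finset.mem_product, Finset.mem_Icc]
  omega

lemma w_le_add_sum_excess {j k : ℤ} (hjk : j < k) :
    w M j k ω ≤ (((k - j : ℤ) : ℝ) : EReal)
      + ∑ q ∈ (Finset.Icc j k ×ˢ Finset.Icc j k).filter (fun q => q.1 < q.2),
          excess (M.v q.1 q.2 ω) (q.2 - q.1) :=
  w_le_add_of_forall_isPath M ω hjk fun _ hp => pathExcess_le_sum_excess M ω hp

lemma excess_le_Zx {x y : ℤ} (h : x < y) :
    excess (M.v x y ω) (y - x) ≤ Zx M x ω :=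
  le_iSup (fun y : {y // x < y} => excess (M.v x y ω) (y - x)) ⟨y, h⟩

lemma Zx_nonneg (x : ℤ) : 0 ≤ Zx M x ω :=
  (excess_nonneg _ _).trans (excess_le_Zx M ω (lt_add_one x))

lemma pathExcess_le_sum_Zx {g : ℕ} {p : List ℤ} (hp : IsPath 0 g p) :
    pathExcess M p ω ≤ ∑ i ∈ Finset.range g, Zx M i ω := by
  calc pathExcess M p ω ≤ ((edges p).map fun e => Zx M e.1 ω).sum :=
        List.sum_le_sum fun e he => excess_le_Zx M ω (hp.bounds_of_mem_edges e he).2.1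
    _ = ∑ x ∈ ((edges p).map Prod.fst).toFinset, Zx M x ω := by
        rw [List.sum_toFinset _ hp.nodup_map_fst_edges, List.map_map]
        rfl
    _ ≤ ∑ x ∈ (Finset.range g).image (Nat.cast : ℕ → ℤ), Zx M x ω := by
        refine Finset.sum_le_sum_of_subset_of_nonneg (fun x hx => ?_) fun x _ _ => Zx_nonneg M ω x
        obtain ⟨e, he, rfl⟩ := List.mem_map.mp (List.mem_toFinset.mp hx)
        obtain ⟨h0, hlt, hg⟩ := hp.bounds_of_mem_edges e he
        exact Finset.mem_image.mpr ⟨e.1.toNat, Finset.mem_range.mpr (by omega), by omega⟩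
    _ = ∑ i ∈ Finset.range g, Zx M i ω := Finset.sum_image fun a _ b _ h => Nat.cast_injective h

lemma w_le_add_sum_Zx (g : ℕ) :
    w M 0 g ω ≤ ((g : ℝ) : EReal) + ∑ i ∈ Finset.range g, Zx M i ω := by
  rcases Nat.eq_zero_or_pos g with rfl | hg
  · simp [w]
  · simpa using w_le_add_of_forall_isPath M ω (Int.natCast_pos.mpr hg) fun _ hp =>
      pathExcess_le_sum_Zx M ω hp

end PathBounds

theorem _root_.ProbabilityTheory.iIndepFun.curry {ι κ Ω β : Type*} {mΩ : MeasurableSpace Ω}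
    [MeasurableSpace β] {P : Measure Ω} {X : ι → κ → Ω → β} (hX : ∀ i j, Measurable (X i j))
    (h : iIndepFun (fun p : ι × κ => X p.1 p.2) P) :
    iIndepFun (fun i ω j => X i j ω) P := by
  have := h.isProbabilityMeasure
  have _ i j : IsProbabilityMeasure (P.map (X i j)) :=
    Measure.isProbabilityMeasure_map (hX i j).aemeasurable
  have hrow i : P.map (fun ω j => X i j ω) = Measure.infinitePi (fun j => P.map (X i j)) :=
    (h.precomp (Prod.mk_right_injective i)).map_fun_eq_infinitePi_map (hX i)
  rw [iIndepFun_iff_map_fun_eq_infinitePi_map (fun i => by fun_prop)]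
  simp_rw [hrow]
  calc P.map (fun ω i j => X i j ω)
      = (P.map (fun ω (p : ι × κ) => X p.1 p.2 ω)).map (MeasurableEquiv.curry ι κ β) := by
        rw [Measure.map_map (by fun_prop) (by fun_prop)]
        rfl
    _ = _ := by
        rw [h.map_fun_eq_infinitePi_map (fun p : ι × κ => hX p.1 p.2)]
        exact Measure.infinitePi_map_curry fun i j => P.map (X i j)

lemma measurable_excess (d : ℤ) : Measurable (excess · d) :=
  Monotone.measurable fun _ _ hab => max_le_max (EReal.sub_le_sub hab le_rfl) le_rfl

def outWeight (M : EdgeData Ω) (x : ℤ) (ω : Ω) (n : ℕ) : EReal := M.v x (x + 1 + n) ω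

def supExcess (u : ℕ → EReal) : EReal := ⨆ n : ℕ, excess (u n) (n + 1)

lemma measurable_supExcess : Measurable supExcess :=
  .iSup fun n => (measurable_excess _).comp (measurable_pi_apply n)

section Rows

variable (M : EdgeData Ω)

lemma Zx_eq_supExcess_comp (x : ℤ) : Zx M x = supExcess ∘ outWeight M x := by
  funext ω
  have hlen (n : ℕ) : x + 1 + (n : ℤ) - x = n + 1 := by ring
  refine le_antisymm (iSup_le fun ⟨y, hy⟩ => ?_) (iSup_le fun n => ?_)
  · obtain ⟨n, rfl⟩ : ∃ n : ℕ, y = x + 1 + n := ⟨(y - x - 1).toNat, by omega⟩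
    exact le_iSup_of_le n (by rw [hlen]; rfl)
  · exact le_iSup_of_le ⟨x + 1 + n, by omega⟩ (by rw [hlen]; rfl)

lemma iIndepFun_outWeight_uncurried :
    iIndepFun (fun p : ℤ × ℕ => fun ω => outWeight M p.1 ω p.2) ℙ := by
  let g : ℤ × ℕ → {e : ℤ × ℤ // e.1 < e.2} := fun p => ⟨(p.1, p.1 + 1 + p.2), by omega⟩
  have hg : g.Injective := by
    rintro ⟨x, n⟩ ⟨y, m⟩ h
    simp only [g, Subtype.mk.injEq, Prod.mk.injEq] at h
    ext <;> simp only <;> omega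
  exact M.v_indep.precomp hg

lemma iIndepFun_outWeight : iIndepFun (outWeight M) ℙ :=
  (iIndepFun_outWeight_uncurried M).curry fun _ _ => M.v_meas _ _

lemma map_outWeight (x : ℤ) :
    Measure.map (outWeight M x) ℙ = Measure.map (outWeight M 0) ℙ := by
  have := M.v_indep.isProbabilityMeasure
  have hlaw y : Measure.map (outWeight M y) ℙ
      = Measure.infinitePi fun n : ℕ => Measure.map (M.v y (y + 1 + n)) ℙ :=
    ((iIndepFun_outWeight_uncurried M).precomp
      (Prod.mk_right_injective y)).map_fun_eq_infinitePi_map fun n => M.v_meas _ _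
  simp only [hlaw, fun y (n : ℕ) => M.v_ident y (y + 1 + n) (by omega)]

lemma iIndepFun_Zx : iIndepFun (Zx M) ℙ := by
  rw [show Zx M = fun x => supExcess ∘ outWeight M x from funext (Zx_eq_supExcess_comp M)]
  exact (iIndepFun_outWeight M).comp (fun _ => supExcess) fun _ => measurable_supExcess

lemma map_Zx (x : ℤ) : Measure.map (Zx M x) ℙ = Measure.map (Zx M 0) ℙ := by
  have hmeas y : Measurable (outWeight M y) := measurable_pi_lambda _ fun n => M.v_meas _ _
  rw [Zx_eq_supExcess_comp, Zx_eq_supExcess_comp,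
    ← Measure.map_map measurable_supExcess (hmeas x),
    ← Measure.map_map measurable_supExcess (hmeas 0), map_outWeight]

end Rows

theorem pathwise_weight_bound_general {Ω : Type} [MeasureSpace Ω]
    (M : EdgeData Ω) :
    (∀ᵐ ω ∂ℙ, ∀ j k : ℤ, j < k →
      w M j k ω ≤ (((k - j : ℤ) : ℝ) : EReal)
        + ∑ p ∈ (Finset.Icc j k ×ˢ Finset.Icc j k).filter (fun p => p.1 < p.2),
            max (M.v p.1 p.2 ω - (((p.2 - p.1 : ℤ) : ℝ) : EReal)) 0) ∧
    (∀ G : Ω → ℕ, ∀ᵐ ω ∂ℙ,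
      w M 0 (G ω : ℤ) ω ≤ ((G ω : ℝ) : EReal)
        + ∑ i ∈ Finset.range (G ω), Zx M (i : ℤ) ω) ∧
    iIndepFun (fun x : ℤ => Zx M x) ℙ ∧
    (∀ x : ℤ, Measure.map (Zx M x) ℙ = Measure.map (Zx M 0) ℙ) :=
  ⟨ae_of_all _ fun ω _ _ hjk => w_le_add_sum_excess M ω hjk,
    fun G => ae_of_all _ fun ω => w_le_add_sum_Zx M ω (G ω),
    iIndepFun_Zx M, map_Zx M⟩

/-- **The pathwise upper bound (proof of Lemma 5).** Almost surely, for all `j < k`,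
`w_{j,k} ≤ (k - j) + Σ_{j ≤ x < y ≤ k} max (v_{x,y} - (y - x), 0)`; consequently, for any
`ℕ`-valued random variable `G` (e.g. `Γ₀`),
`w_{0,G} ≤ G + Σ_{x=0}^{G-1} Z_x`, where the `Z_x` are i.i.d. -/
theorem pathwise_weight_bound {Ω : Type} [MeasureSpace Ω]
    [IsProbabilityMeasure (ℙ : Measure Ω)]
    (M : EdgeData Ω) :
    (∀ᵐ ω ∂ℙ, ∀ j k : ℤ, j < k →
      w M j k ω ≤ (((k - j : ℤ) : ℝ) : EReal)
        + ∑ p ∈ (Finset.Icc j k ×ˢ Finset.Icc j k).filter (fun p => p.1 < p.2),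
            max (M.v p.1 p.2 ω - (((p.2 - p.1 : ℤ) : ℝ) : EReal)) 0) ∧
    (∀ G : Ω → ℕ, ∀ᵐ ω ∂ℙ,
      w M 0 (G ω : ℤ) ω ≤ ((G ω : ℝ) : EReal)
        + ∑ i ∈ Finset.range (G ω), Zx M (i : ℤ) ω) ∧
    iIndepFun (fun x : ℤ => Zx M x) ℙ ∧
    (∀ x : ℤ, Measure.map (Zx M x) ℙ = Measure.map (Zx M 0) ℙ) :=
  pathwise_weight_bound_general M

end MaxPathWeight
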